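/- For every integer d ≥ 1 and every x ∈ ℝ^d, the chain function satisfies prog_0(∇H_d(x)) ≤ prog_{1/2}(x) + 1. -/

import Mathlib

/-- `Ψ(t) = 0` for `t ≤ 1/2` and `Ψ(t) = exp(1 − 1/(2t−1)²)` for `t > 1/2`. -/
noncomputable def Psi (t : ℝ) : ℝ :=
  if t ≤ 1 / 2 then 0 else Real.exp (1 - 1 / (2 * t - 1) ^ 2)

/-- `Φ(t) = √e ∫_{−∞}^{t} exp(−τ²/2) dτ`. -/
noncomputable def Phi (t : ℝ) : ℝ :=
  Real.sqrt (Real.exp 1) * ∫ τ in Set.Iic t, Real.exp (-τ ^ 2 / 2)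

/-- The `i`-th coordinate (1-based, `1 ≤ i ≤ d`) of a vector in `ℝ^d`;
zero when out of range. -/
noncomputable def coord (d : ℕ) (y : EuclideanSpace ℝ (Fin d)) (i : ℕ) : ℝ :=
  if h : i - 1 < d then y ⟨i - 1, h⟩ else 0

/-- The chain function
`H_d(x) = −Ψ(1)Φ(x₁) + ∑_{i=2}^d (Ψ(−x_{i−1})Φ(−x_i) − Ψ(x_{i−1})Φ(x_i))`. -/
noncomputable def Hchain (d : ℕ) (y : EuclideanSpace ℝ (Fin d)) : ℝ :=
  -Psi 1 * Phi (coord d y 1) +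
    ∑ i ∈ Finset.Icc 2 d,
      (Psi (-coord d y (i - 1)) * Phi (-coord d y i) -
        Psi (coord d y (i - 1)) * Phi (coord d y i))

open Classical in
/-- The progress index `prog_a(x) = max({i ∈ {1,…,d} : |x_i| > a} ∪ {0})`. -/
noncomputable def prog (d : ℕ) (a : ℝ) (y : EuclideanSpace ℝ (Fin d)) : ℕ :=
  ((Finset.Icc 1 d).filter fun i => a < |coord d y i|).sup id

/-!
The `i`-th link `Ψ(∓x_{i-1})Φ(∓x_i)` of `H_d` involves only the coordinates `i - 1` and `i`,
so `∂_k H_d` sees only the links `k` and `k + 1`, whose `Ψ`-factors are evaluated at `±x_{k-1}`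
and `±x_k`. When `k > prog_{1/2}(x) + 1` both of these lie in `[-1/2, 1/2]`, where `Ψ` vanishes
together with its derivative (there `Ψ ≥ 0` attains its minimum `0`). Both links are therefore
flat at `x`, and `∂_k H_d(x) = 0`.
-/

open Real Set Filter MeasureTheory Asymptotics

lemma hasDerivAt_mul_abs (a : ℝ) : HasDerivAt (fun s : ℝ => s * |s|) (2 * |a|) a := by
  rcases eq_or_ne a 0 with rfl | ha
  · rw [hasDerivAt_iff_isLittleO_nhds_zero, ← isLittleO_norm_left]
    simpa [abs_mul_abs_self, ← sq] using isLittleO_pow_id (𝕜 := ℝ) one_lt_two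
  · simpa [self_mul_sign, two_mul] using (hasDerivAt_id' a).fun_mul (hasDerivAt_abs ha)

-- `s ↦ s * |s|` is `C¹` and has the sign of `s`, so this exhibits `Ψ` as a differentiable
-- composite.
lemma Psi_eq_exp_one_mul_expNegInvGlue (t : ℝ) :
    Psi t = exp 1 * expNegInvGlue ((2 * t - 1) * |2 * t - 1|) := by
  rcases le_or_gt t (1 / 2) with h | h
  · have hu : 2 * t - 1 ≤ 0 := by linarith
    rw [Psi, if_pos h, expNegInvGlue.zero_of_nonpos
      (mul_nonpos_of_nonpos_of_nonneg hu (abs_nonneg _)), mul_zero]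
  · have hu : 0 < 2 * t - 1 := by linarith
    rw [Psi, if_neg h.not_ge, abs_of_pos hu, expNegInvGlue, if_neg (not_le.mpr (by positivity)),
      ← exp_add]
    congr 1
    field_simp
    ring

lemma Psi_nonneg (t : ℝ) : 0 ≤ Psi t := by
  rw [Psi_eq_exp_one_mul_expNegInvGlue]
  exact mul_nonneg (exp_pos 1).le (expNegInvGlue.nonneg _)

lemma Psi_of_le {t : ℝ} (ht : t ≤ 1 / 2) : Psi t = 0 := if_pos ht

@[fun_prop]
lemma differentiable_Psi : Differentiable ℝ Psi := by
  intro t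
  rw [show Psi = _ from funext Psi_eq_exp_one_mul_expNegInvGlue]
  have hinner : HasDerivAt (fun t : ℝ => (2 * t - 1) * |2 * t - 1|) (2 * |2 * t - 1| * 2) t :=
    (hasDerivAt_mul_abs _).comp t
      (((hasDerivAt_id t).const_mul 2).sub_const 1 |>.congr_deriv (by simp))
  exact (((expNegInvGlue.contDiff (n := 1)).differentiable one_ne_zero _).comp t
    hinner.differentiableAt).const_mul _

lemma hasDerivAt_Psi_of_le {t : ℝ} (ht : t ≤ 1 / 2) : HasDerivAt Psi 0 t := by
  have hmin : IsLocalMin Psi t :=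
    Eventually.of_forall fun s => (Psi_of_le ht).trans_le (Psi_nonneg s)
  simpa [hmin.deriv_eq_zero] using (differentiable_Psi t).hasDerivAt

@[fun_prop]
lemma differentiable_Phi : Differentiable ℝ Phi := by
  set g : ℝ → ℝ := fun τ => exp (-τ ^ 2 / 2)
  have hg : Integrable g := by
    simpa [g, div_eq_inv_mul] using integrable_exp_neg_mul_sq (b := 1 / 2) (by norm_num)
  have hsplit :
      (fun t => ∫ τ in Iic t, g τ) = fun t => (∫ τ in Iic 0, g τ) + ∫ τ in 0..t, g τ := by
    funext t
    rw [← intervalIntegral.integral_Iic_sub_Iic hg.integrableOn hg.integrableOn, add_sub_cancel]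
  intro t
  have hftc :=
    ((continuous_exp.comp (by fun_prop)).integral_hasStrictDerivAt (f := g) 0 t).hasDerivAt
  have hIic : DifferentiableAt ℝ (fun t => ∫ τ in Iic t, g τ) t := by
    rw [hsplit]
    exact hftc.differentiableAt.const_add _
  exact hIic.const_mul _

lemma hasFDerivAt_Psi_comp_of_le {E : Type*} [NormedAddCommGroup E] [NormedSpace ℝ E]
    {u : E → ℝ} {u' : E →L[ℝ] ℝ} {x : E} (hu : HasFDerivAt u u' x) (hx : u x ≤ 1 / 2) :
    HasFDerivAt (fun y => Psi (u y)) (0 : E →L[ℝ] ℝ) x :=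
  ((hasDerivAt_Psi_of_le hx).comp_hasFDerivAt x hu).congr_fderiv (zero_smul ℝ u')

lemma HasFDerivAt.mul_of_eq_zero {E : Type*} [NormedAddCommGroup E] [NormedSpace ℝ E]
    {f g : E → ℝ} {x : E} (hf : HasFDerivAt f (0 : E →L[ℝ] ℝ) x) (hfx : f x = 0)
    (hg : DifferentiableAt ℝ g x) : HasFDerivAt (fun y => f y * g y) (0 : E →L[ℝ] ℝ) x :=
  (hf.fun_mul hg.hasFDerivAt).congr_fderiv (by simp [hfx])

lemma fderiv_apply_eq_zero_of_forall_add_smul_eq {E F : Type*} [NormedAddCommGroup E]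
    [NormedSpace ℝ E] [NormedAddCommGroup F] [NormedSpace ℝ F] {f : E → F} {x v : E}
    (h : ∀ t : ℝ, f (x + t • v) = f x) : fderiv ℝ f x v = 0 := by
  by_cases hf : DifferentiableAt ℝ f x
  · rw [← hf.lineDeriv_eq_fderiv, lineDeriv]
    simp [h]
  · simp [fderiv_zero_of_not_differentiableAt hf]

lemma gradient_apply_eq_fderiv_single {ι : Type*} [Fintype ι] [DecidableEq ι]
    (f : EuclideanSpace ℝ ι → ℝ) (x : EuclideanSpace ℝ ι) (k : ι) :
    gradient f x k = fderiv ℝ f x (EuclideanSpace.single k 1) := by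
  rw [← toDual_gradient, InnerProductSpace.toDual_apply_apply, EuclideanSpace.inner_single_right]
  simp

section Coordinates

variable {d : ℕ}

lemma coord_succ (y : EuclideanSpace ℝ (Fin d)) (k : Fin d) : coord d y (k + 1) = y k := by
  simp [coord]

@[fun_prop]
lemma differentiable_coord (i : ℕ) :
    Differentiable ℝ (fun y : EuclideanSpace ℝ (Fin d) => coord d y i) := by
  unfold coord
  split_ifs <;> fun_prop

lemma coord_add_smul_single (x : EuclideanSpace ℝ (Fin d)) (k : Fin d) (t : ℝ) {i : ℕ}
    (hi : i - 1 ≠ k) : coord d (x + t • EuclideanSpace.single k 1) i = coord d x i := by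
  unfold coord
  split_ifs with h
  · have hk : (⟨i - 1, h⟩ : Fin d) ≠ k := fun hk => hi (congrArg Fin.val hk)
    simp [hk]
  · rfl

lemma le_prog {a : ℝ} {y : EuclideanSpace ℝ (Fin d)} {i : ℕ} (hi : 1 ≤ i) (hid : i ≤ d)
    (h : a < |coord d y i|) : i ≤ prog d a y :=
  Finset.le_sup (f := id) (Finset.mem_filter.mpr ⟨Finset.mem_Icc.mpr ⟨hi, hid⟩, h⟩)

lemma prog_le_iff {a : ℝ} {y : EuclideanSpace ℝ (Fin d)} {n : ℕ} :
    prog d a y ≤ n ↔ ∀ i, 1 ≤ i → i ≤ d → a < |coord d y i| → i ≤ n := by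
  simp [prog, Finset.sup_le_iff, and_imp]

lemma abs_coord_le_of_prog_lt {a : ℝ} {y : EuclideanSpace ℝ (Fin d)} {i : ℕ} (hid : i ≤ d)
    (h : prog d a y < i) : |coord d y i| ≤ a := by
  by_contra! hlt
  exact (le_prog (by omega) hid hlt).not_gt h

end Coordinates

noncomputable def chainLink (d i : ℕ) (y : EuclideanSpace ℝ (Fin d)) : ℝ :=
  Psi (-coord d y (i - 1)) * Phi (-coord d y i) - Psi (coord d y (i - 1)) * Phi (coord d y i)

section Chain

variable {d : ℕ}

lemma Hchain_eq_add_sum_chainLink :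
    Hchain d = fun y => -Psi 1 * Phi (coord d y 1) + ∑ i ∈ Finset.Icc 2 d, chainLink d i y :=
  rfl

lemma differentiable_chainLink (i : ℕ) : Differentiable ℝ (chainLink d i) := by
  unfold chainLink
  fun_prop

lemma hasFDerivAt_chainLink_of_abs_le {x : EuclideanSpace ℝ (Fin d)} {i : ℕ}
    (hx : |coord d x (i - 1)| ≤ 1 / 2) :
    HasFDerivAt (chainLink d i) (0 : EuclideanSpace ℝ (Fin d) →L[ℝ] ℝ) x := by
  obtain ⟨hneg, hpos⟩ := abs_le.mp hx
  have hc := (differentiable_coord (i - 1) x).hasFDerivAt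
  have hlink := ((hasFDerivAt_Psi_comp_of_le hc.fun_neg (by linarith)).mul_of_eq_zero
      (Psi_of_le (by linarith))
      (by fun_prop : DifferentiableAt ℝ (fun y => Phi (-coord d y i)) x)).sub
    ((hasFDerivAt_Psi_comp_of_le hc hpos).mul_of_eq_zero (Psi_of_le hpos)
      (by fun_prop : DifferentiableAt ℝ (fun y => Phi (coord d y i)) x))
  exact hlink.congr_fderiv (sub_zero 0)

lemma chainLink_add_smul_single (x : EuclideanSpace ℝ (Fin d)) (k : Fin d) (t : ℝ) {i : ℕ}
    (hprev : i - 1 - 1 ≠ k) (hcur : i - 1 ≠ k) :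
    chainLink d i (x + t • EuclideanSpace.single k 1) = chainLink d i x := by
  simp only [chainLink, coord_add_smul_single x k t hprev, coord_add_smul_single x k t hcur]

-- `k : Fin d` is 0-based: `single k 1` points along the 1-based coordinate `k + 1`.
theorem fderiv_Hchain_single_eq_zero {x : EuclideanSpace ℝ (Fin d)} {k : Fin d}
    (hk : 1 ≤ (k : ℕ)) (hprev : |coord d x k| ≤ 1 / 2) (hcur : |coord d x (k + 1)| ≤ 1 / 2) :
    fderiv ℝ (Hchain d) x (EuclideanSpace.single k 1) = 0 := by
  have hhead : HasFDerivAt (fun y => -Psi 1 * Phi (coord d y 1))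
      (fderiv ℝ (fun y => -Psi 1 * Phi (coord d y 1)) x) x :=
    (by fun_prop : DifferentiableAt ℝ (fun y => -Psi 1 * Phi (coord d y 1)) x).hasFDerivAt
  have hlinks := HasFDerivAt.fun_sum (u := Finset.Icc 2 d)
    fun i _ => (differentiable_chainLink (d := d) i x).hasFDerivAt
  have hhead_const : ∀ t : ℝ, -Psi 1 * Phi (coord d (x + t • EuclideanSpace.single k 1) 1) =
      -Psi 1 * Phi (coord d x 1) := fun t => by
    rw [coord_add_smul_single x k t (by omega)]
  rw [Hchain_eq_add_sum_chainLink, (hhead.fun_add hlinks).fderiv, add_apply, sum_apply,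
    fderiv_apply_eq_zero_of_forall_add_smul_eq hhead_const, zero_add]
  refine Finset.sum_eq_zero fun i hi => ?_
  have hi2 := (Finset.mem_Icc.mp hi).1
  obtain h | h | ⟨hprev', hcur'⟩ :
      i - 1 = k + 1 ∨ i = k + 1 ∨ (i - 1 - 1 ≠ k ∧ i - 1 ≠ k) := by omega
  · rw [(hasFDerivAt_chainLink_of_abs_le (h ▸ hcur)).fderiv, zero_apply]
  · rw [(hasFDerivAt_chainLink_of_abs_le (by simpa [h] using hprev)).fderiv, zero_apply]
  · exact fderiv_apply_eq_zero_of_forall_add_smul_eq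
      (chainLink_add_smul_single x k · hprev' hcur')

end Chain

theorem chain_progress_bound_general (d : ℕ)
    (x : EuclideanSpace ℝ (Fin d)) :
    prog d 0 (gradient (Hchain d) x) ≤ prog d (1 / 2) x + 1 := by
  rw [prog_le_iff]
  intro b hb hbd hgrad
  by_contra! hlt
  obtain ⟨k, rfl⟩ : ∃ k : Fin d, b = k + 1 := ⟨⟨b - 1, by omega⟩, (Nat.sub_add_cancel hb).symm⟩
  rw [coord_succ, gradient_apply_eq_fderiv_single,
    fderiv_Hchain_single_eq_zero (by omega) (abs_coord_le_of_prog_lt (by omega) (by omega))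
      (abs_coord_le_of_prog_lt hbd (by omega))] at hgrad
  simp at hgrad

/-- Zero-chain property: `prog_0(∇H_d(x)) ≤ prog_{1/2}(x) + 1`. -/
theorem chain_progress_bound (d : ℕ) (hd : 1 ≤ d)
    (x : EuclideanSpace ℝ (Fin d)) :
    prog d 0 (gradient (Hchain d) x) ≤ prog d (1 / 2) x + 1 :=
  chain_progress_bound_general d x
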